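/- arXiv:1202.5385 — 9 statements merged into one kernel-verified Lean document; each statement's English description precedes it below -/
import Mathlib

section
/- Let l + m = t + j with j > 0. Then Q_t^{(l,m)} = C(t-j, l-j)·C(⌊(t+j)/2⌋, j) is odd if and only if C(t+j, l+j)·C(l+j, 2j) is odd, i.e., if and only if [t+j]_i ≥ [l+j]_i ≥ [2j]_i for all i, where [n]_i denotes the i-th binary digit of n. -/
/-- `Q t l m` = C(2t-l-m, t-m) * C(⌊(l+m)/2⌋, l+m-t), with the convention that
binomial coefficients with negative (out-of-range) arguments are zero; the guard
handles the cases where natural subtraction would otherwise misbehave. -/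
def Q (t l m : ℕ) : ℕ :=
  if t < m ∨ l + m < t then 0
  else Nat.choose (2 * t - l - m) (t - m) * Nat.choose ((l + m) / 2) (l + m - t)

/-- Lucas' theorem mod 2: `C(n,k)` is odd iff the bits of `k` dominate by those of `n`. -/
lemma lucas_two : ∀ n k : ℕ, Odd (n.choose k) ↔ ∀ i, k.testBit i → n.testBit i := by
  haveI : Fact (Nat.Prime 2) := ⟨Nat.prime_two⟩
  intro n
  induction n using Nat.strong_induction_on with
  | _ n ih =>
    intro k
    rcases Nat.eq_zero_or_pos n with rfl | hn
    · cases k with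
      | zero => simp
      | succ k =>
        rw [Nat.choose_zero_succ]
        constructor
        · intro h; exact absurd h (by decide)
        · intro h
          have hz : k + 1 = 0 := Nat.zero_of_testBit_eq_false fun i => by
            rcases Bool.eq_false_or_eq_true ((k + 1).testBit i) with hb | hb
            · have := h i hb
              rw [Nat.zero_testBit] at this
              exact absurd this (by simp)
            · exact hb
          omega
    · have key := @Choose.choose_modEq_choose_mod_mul_choose_div_nat n k 2 _
      have hodd : Odd (n.choose k) ↔
          Odd ((n % 2).choose (k % 2) * (n / 2).choose (k / 2)) := by
        rw [Nat.odd_iff, Nat.odd_iff, key]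
      rw [hodd, Nat.odd_mul, ih (n / 2) (by omega) (k / 2)]
      have h0 : Odd ((n % 2).choose (k % 2)) ↔ (k.testBit 0 → n.testBit 0) := by
        have hn2 := Nat.mod_two_eq_zero_or_one n
        have hk2 := Nat.mod_two_eq_zero_or_one k
        rcases hn2 with h1 | h1 <;> rcases hk2 with h2 | h2 <;>
          simp [h1, h2, Nat.testBit_zero]
      rw [h0]
      constructor
      · rintro ⟨ha, hb⟩ i
        cases i with
        | zero => exact ha
        | succ i =>
          rw [Nat.testBit_succ, Nat.testBit_succ]
          exact hb i
      · intro hall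
        refine ⟨hall 0, fun i => ?_⟩
        have := hall (i + 1)
        rwa [Nat.testBit_succ, Nat.testBit_succ] at this

/-- Halving lemma: C(a, 2j) is odd iff C(a/2, j) is odd. -/
lemma choose_two_mul_odd (a j : ℕ) :
    Odd (a.choose (2 * j)) ↔ Odd ((a / 2).choose j) := by
  rw [lucas_two, lucas_two]
  constructor
  · intro h i hj
    have := h (i + 1)
    rw [Nat.testBit_succ, Nat.testBit_succ] at this
    apply this
    rwa [Nat.mul_div_cancel_left _ (by norm_num : (0:ℕ) < 2)]
  · intro h i
    cases i with
    | zero =>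
      intro hb
      rw [Nat.testBit_zero] at hb
      simp [Nat.mul_mod_right] at hb
    | succ i =>
      rw [Nat.testBit_succ, Nat.testBit_succ,
        Nat.mul_div_cancel_left _ (by norm_num : (0:ℕ) < 2)]
      exact h i

/-- If `l + m = t + j` with `j > 0`, then `Q t l m` is odd iff
`C(t+j, l+j) * C(l+j, 2j)` is odd, iff `[t+j]_i ≥ [l+j]_i ≥ [2j]_i` for all `i`. -/
theorem stmt_7 (t l m j : ℕ) (hj : 0 < j) (h : l + m = t + j) :
    (Odd (Q t l m) ↔ Odd (Nat.choose (t + j) (l + j) * Nat.choose (l + j) (2 * j))) ∧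
    (Odd (Q t l m) ↔
      ∀ i : ℕ, ((l + j).testBit i → (t + j).testBit i)
        ∧ ((2 * j).testBit i → (l + j).testBit i)) := by
  have hbits : Odd (Nat.choose (t + j) (l + j) * Nat.choose (l + j) (2 * j)) ↔
      ∀ i : ℕ, ((l + j).testBit i → (t + j).testBit i)
        ∧ ((2 * j).testBit i → (l + j).testBit i) := by
    rw [Nat.odd_mul, lucas_two, lucas_two, ← forall_and]
  have hmain : Odd (Q t l m) ↔
      Odd (Nat.choose (t + j) (l + j) * Nat.choose (l + j) (2 * j)) := by
    by_cases hg : t < m ∨ l + m < t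
    · have ht : t < m := by omega
      have hl : l + j < 2 * j := by omega
      rw [Q, if_pos hg]
      rw [Nat.choose_eq_zero_of_lt hl, Nat.mul_zero]
    · rw [Q, if_neg hg]
      push_neg at hg
      have hm : m ≤ t := hg.1
      have e1 : 2 * t - l - m = t - j := by omega
      have e2 : t - m = l - j := by omega
      have e3 : (l + m) / 2 = (t + j) / 2 := by rw [h]
      have e4 : l + m - t = j := by omega
      rw [e1, e2, e3, e4, Nat.odd_mul, ← choose_two_mul_odd (t + j) j]
      rcases le_or_gt l t with hlt | hlt
      · rw [Nat.choose_mul (n := t + j) (by omega : 2 * j ≤ l + j)]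
        have e5 : t + j - 2 * j = t - j := by omega
        have e6 : l + j - 2 * j = l - j := by omega
        rw [e5, e6, Nat.odd_mul, and_comm]
      · constructor
        · rintro ⟨h1, h2⟩
          exfalso
          rcases le_or_gt j t with hjt | hjt
          · rw [Nat.choose_eq_zero_of_lt (by omega : t - j < l - j)] at h1
            exact (by decide : ¬ Odd 0) h1
          · rw [Nat.choose_eq_zero_of_lt (by omega : t + j < 2 * j)] at h2
            exact (by decide : ¬ Odd 0) h2
        · intro hodd
          exfalso
          rw [Nat.choose_eq_zero_of_lt (by omega : t + j < l + j), Nat.zero_mul] at hodd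
          exact (by decide : ¬ Odd 0) hodd
  exact ⟨hmain, hmain.trans hbits⟩
end

section
/- (Back diagonality) Let t, l, m be natural numbers such that Q_t^{(l,m)} is odd, where Q_t^{(l,m)} = C(2t-l-m, t-m)·C(⌊(l+m)/2⌋, l+m-t). Then there exist l' ≤ l and m' ≤ m with l' + m' = t such that Q_t^{(l',m')} = C(t, l') is odd (i.e., C(t, m') is odd). -/
lemma odd_choose_iff (n k : ℕ) :
    Odd (n.choose k) ↔ k % 2 ≤ n % 2 ∧ Odd ((n/2).choose (k/2)) := by
  have hp : Fact (Nat.Prime 2) := ⟨Nat.prime_two⟩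
  have h := @Choose.choose_modEq_choose_mod_mul_choose_div_nat n k 2 hp
  rw [Nat.ModEq] at h
  rw [Nat.odd_iff, Nat.odd_iff, h]
  rcases Nat.mod_two_eq_zero_or_one n with h1|h1 <;>
    rcases Nat.mod_two_eq_zero_or_one k with h2|h2 <;>
      simp [h1, h2, Nat.mul_mod]

lemma key (s : ℕ) : ∀ n a b : ℕ, n + b ≤ s → Odd (n.choose a) →
    Odd ((n / 2 + b).choose b) →
    ∃ c, a ≤ c ∧ c ≤ a + b ∧ Odd ((n + b).choose c) := by
  induction s with
  | zero =>
    intro n a b hs h1 h2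
    have hn : n = 0 ∧ b = 0 := by omega
    obtain ⟨rfl, rfl⟩ := hn
    have : a = 0 := by
      by_contra hne
      rw [Nat.choose_eq_zero_of_lt (by omega)] at h1
      simp at h1
    subst this
    exact ⟨0, le_refl _, by omega, by simpa using h1⟩
  | succ s ih =>
    intro n a b hs h1 h2
    rcases Nat.eq_zero_or_pos (n + b) with hz | hpos
    · -- n + b = 0, same as base
      have hn : n = 0 ∧ b = 0 := by omega
      obtain ⟨rfl, rfl⟩ := hn
      have : a = 0 := by
        by_contra hne
        rw [Nat.choose_eq_zero_of_lt (by omega)] at h1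
        simp at h1
      subst this
      exact ⟨0, le_refl _, by omega, by simpa using h1⟩
    rw [odd_choose_iff] at h1 h2
    obtain ⟨hα, h1'⟩ := h1
    obtain ⟨hβ, h2'⟩ := h2
    -- notation: N = n/2, A = a/2, B = b/2, ν = n%2, α = a%2, β = b%2
    rcases Nat.mod_two_eq_zero_or_one b with hb | hb
    · -- β = 0
      have e1 : (n / 2 + b) / 2 = n / 2 / 2 + b / 2 := by omega
      rw [e1] at h2'
      obtain ⟨C, hC1, hC2, hC3⟩ := ih (n / 2) (a / 2) (b / 2) (by omega) h1' h2'
      refine ⟨2 * C + a % 2, by omega, by omega, ?_⟩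
      rw [odd_choose_iff]
      constructor
      · omega
      · have : (n + b) / 2 = n / 2 + b / 2 := by omega
        rw [this]
        have : (2 * C + a % 2) / 2 = C := by omega
        rw [this]
        exact hC3
    · -- β = 1
      have hNev : n / 2 % 2 = 0 := by omega
      have e1 : (n / 2 + b) / 2 = n / 2 / 2 + b / 2 := by omega
      rw [e1] at h2'
      rcases Nat.mod_two_eq_zero_or_one n with hn | hn
      · -- ν = 0
        obtain ⟨C, hC1, hC2, hC3⟩ := ih (n / 2) (a / 2) (b / 2) (by omega) h1' h2'
        refine ⟨2 * C + a % 2, by omega, by omega, ?_⟩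
        rw [odd_choose_iff]
        refine ⟨by omega, ?_⟩
        have : (n + b) / 2 = n / 2 + b / 2 := by omega
        rw [this]
        have : (2 * C + a % 2) / 2 = C := by omega
        rw [this]
        exact hC3
      · -- ν = 1, N even
        have hAev : a % 2 ≤ 1 := by omega
        have hA2 : a / 2 % 2 = 0 := by
          rw [odd_choose_iff] at h1'
          omega
        -- Odd (choose (N+1) (A + α))
        have h1'' : Odd ((n / 2 + 1).choose (a / 2 + a % 2)) := by
          rw [odd_choose_iff]
          rw [odd_choose_iff] at h1'
          refine ⟨by omega, ?_⟩
          have e2 : (n / 2 + 1) / 2 = n / 2 / 2 := by omega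
          have e3 : (a / 2 + a % 2) / 2 = a / 2 / 2 := by omega
          rw [e2, e3]
          exact h1'.2
        have h2'' : Odd (((n / 2 + 1) / 2 + b / 2).choose (b / 2)) := by
          have : (n / 2 + 1) / 2 = n / 2 / 2 := by omega
          rw [this]
          exact h2'
        obtain ⟨C, hC1, hC2, hC3⟩ := ih (n / 2 + 1) (a / 2 + a % 2) (b / 2)
          (by omega) h1'' h2''
        refine ⟨2 * C, by omega, by omega, ?_⟩
        rw [odd_choose_iff]
        refine ⟨by omega, ?_⟩
        have : (n + b) / 2 = n / 2 + 1 + b / 2 := by omega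
        rw [this]
        have : 2 * C / 2 = C := by omega
        rw [this]
        exact hC3

/-- Back diagonality: if `Q t l m` is odd, there are `l' ≤ l`, `m' ≤ m` with
`l' + m' = t` and `C(t, l')` odd (equivalently, `Q t l' m'` odd). -/
theorem stmt_8 (t l m : ℕ) (h : Odd (Q t l m)) :
    ∃ l' m' : ℕ, l' ≤ l ∧ m' ≤ m ∧ l' + m' = t ∧ Odd (Nat.choose t l') := by
  rw [Q] at h
  split_ifs at h with hguard
  · rw [Nat.odd_iff] at h; omega
  push_neg at hguard
  obtain ⟨hm, hlm⟩ := hguard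
  obtain ⟨h1, h2⟩ := (Nat.odd_mul).mp h
  have hb2 : l + m - t ≤ (l + m) / 2 := by
    by_contra hc
    rw [Nat.choose_eq_zero_of_lt (by omega)] at h2
    simp at h2
  have hle : l + m ≤ 2 * t := by omega
  have e1 : (l + m) / 2 = (2 * t - l - m) / 2 + (l + m - t) := by omega
  rw [e1] at h2
  obtain ⟨c, hc1, hc2, hc3⟩ :=
    key (2 * t - l - m + (l + m - t)) (2 * t - l - m) (t - m) (l + m - t) le_rfl h1 h2
  have he : 2 * t - l - m + (l + m - t) = t := by omega
  rw [he] at hc3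
  have hct : c ≤ t := by
    by_contra hc'
    rw [Nat.choose_eq_zero_of_lt (by omega)] at hc3
    simp at hc3
  exact ⟨c, t - c, by omega, by omega, by omega, hc3⟩
end

section
/- Let t, l, m be natural numbers with l + m - t = j > 0 and suppose Q_t^{(l,m)} is odd. Let s be the largest natural number with [j]_s = 1 (the top bit of j). If 2^s does not divide t, then there exist l' ≤ l and m' ≤ m with l' + m' = t and C(t, l') odd. -/
theorem land_decomp (x y r r' : ℕ) (hr : r ≤ 1) (hr' : r' ≤ 1) :
    (2 * x + r) &&& (2 * y + r') = 2 * (x &&& y) + (r &&& r') := by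
  interval_cases r <;> interval_cases r'
  · simpa [Nat.bit_val] using Nat.land_bit false x false y
  · simpa [Nat.bit_val] using Nat.land_bit false x true y
  · simpa [Nat.bit_val] using Nat.land_bit true x false y
  · simpa [Nat.bit_val] using Nat.land_bit true x true y

theorem odd_choose_iff_s9 : ∀ y x : ℕ, Odd (y.choose x) ↔ x &&& y = x := by
  intro y
  induction y using Nat.strong_induction_on with
  | _ y IH =>
    intro x
    rcases Nat.eq_zero_or_pos y with rfl | hy
    · cases x with
      | zero => simp
      | succ n => simp [Nat.choose_zero_succ, Nat.odd_iff]
    · haveI : Fact (Nat.Prime 2) := ⟨Nat.prime_two⟩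
      have lucas : y.choose x % 2 = (Nat.choose (y%2) (x%2) * Nat.choose (y/2) (x/2)) % 2 :=
        Choose.choose_modEq_choose_mod_mul_choose_div_nat
      obtain ⟨X, Rx, hxe, hRx⟩ : ∃ X R, x = 2*X + R ∧ R ≤ 1 := ⟨x/2, x%2, by omega, by omega⟩
      obtain ⟨Y, Ry, hye, hRy⟩ : ∃ Y R, y = 2*Y + R ∧ R ≤ 1 := ⟨y/2, y%2, by omega, by omega⟩
      rw [show y%2 = Ry by omega, show y/2 = Y by omega,
        show x%2 = Rx by omega, show x/2 = X by omega] at lucas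
      have hodd : Odd (y.choose x) ↔ (Odd (Nat.choose Ry Rx) ∧ Odd (Nat.choose Y X)) := by
        rw [Nat.odd_iff, lucas, ← Nat.odd_iff, Nat.odd_mul]
      have hd := land_decomp X Y Rx Ry hRx hRy
      have b1 : X &&& Y ≤ X := Nat.and_le_left
      have b2 : Rx &&& Ry ≤ Rx := Nat.and_le_left
      rw [hodd, IH Y (by omega) X, hxe, hye, hd]
      interval_cases Rx <;> interval_cases Ry
      · have e : (0:ℕ) &&& 0 = 0 := rfl
        constructor
        · rintro ⟨-, h1⟩; omega
        · intro h1; exact ⟨by decide, by omega⟩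
      · have e : (0:ℕ) &&& 1 = 0 := rfl
        constructor
        · rintro ⟨-, h1⟩; omega
        · intro h1; exact ⟨by decide, by omega⟩
      · have e : (1:ℕ) &&& 0 = 0 := rfl
        constructor
        · rintro ⟨h1, -⟩; exact absurd h1 (by decide)
        · intro h1; exact absurd h1 (by omega)
      · have e : (1:ℕ) &&& 1 = 1 := rfl
        constructor
        · rintro ⟨-, h1⟩; omega
        · intro h1; exact ⟨by decide, by omega⟩

theorem land_sub : ∀ y x : ℕ, x &&& y = x → x &&& (y - x) = 0 := by
  intro y
  induction y using Nat.strong_induction_on with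
  | _ y IH =>
    intro x h
    rcases Nat.eq_zero_or_pos y with rfl | hy
    · have hx : x = 0 := by rw [← h]; simp
      simp [hx]
    · obtain ⟨X, Rx, hxe, hRx⟩ : ∃ X R, x = 2*X + R ∧ R ≤ 1 := ⟨x/2, x%2, by omega, by omega⟩
      obtain ⟨Y, Ry, hye, hRy⟩ : ∃ Y R, y = 2*Y + R ∧ R ≤ 1 := ⟨y/2, y%2, by omega, by omega⟩
      rw [hxe, hye, land_decomp X Y Rx Ry hRx hRy] at h
      have b1 : X &&& Y ≤ X := Nat.and_le_left
      have b2 : Rx &&& Ry ≤ Rx := Nat.and_le_left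
      have h1 : X &&& Y = X := by omega
      have h2 : Rx &&& Ry = Rx := by omega
      have hle : Rx ≤ Ry := by
        interval_cases Rx <;> interval_cases Ry <;> simp_all
      have hle2 : X ≤ Y := h1 ▸ Nat.and_le_right
      have ih := IH Y (by omega) X h1
      rw [hxe, hye, show 2*Y + Ry - (2*X + Rx) = 2*(Y - X) + (Ry - Rx) by omega,
        land_decomp X (Y - X) Rx (Ry - Rx) hRx (by omega), ih]
      interval_cases Rx <;> interval_cases Ry <;> simp_all

theorem land_lower : ∀ j u b : ℕ, b &&& u = b → j &&& (u/2) = 0 →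
    b ≤ (b + j) &&& (u + j) := by
  intro j
  induction j using Nat.strong_induction_on with
  | _ j IH =>
    intro u b hb hj
    rcases Nat.eq_zero_or_pos j with rfl | hjpos
    · simpa [hb] using le_refl b
    · obtain ⟨J, Rj, hje, hRj⟩ : ∃ J R, j = 2*J + R ∧ R ≤ 1 := ⟨j/2, j%2, by omega, by omega⟩
      obtain ⟨U, Ru, hue, hRu⟩ : ∃ U R, u = 2*U + R ∧ R ≤ 1 := ⟨u/2, u%2, by omega, by omega⟩
      obtain ⟨U2, RU, hUe, hRU⟩ : ∃ V R, U = 2*V + R ∧ R ≤ 1 := ⟨U/2, U%2, by omega, by omega⟩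
      obtain ⟨B, Rb, hbe, hRb⟩ : ∃ B R, b = 2*B + R ∧ R ≤ 1 := ⟨b/2, b%2, by omega, by omega⟩
      -- decompose hb
      rw [hbe, hue, land_decomp B U Rb Ru hRb hRu] at hb
      have c1 : B &&& U ≤ B := Nat.and_le_left
      have c2 : Rb &&& Ru ≤ Rb := Nat.and_le_left
      have hbU : B &&& U = B := by omega
      have hbr : Rb &&& Ru = Rb := by omega
      -- decompose hj
      rw [hje, hue, show (2*U + Ru)/2 = U by omega, hUe,
        land_decomp J U2 Rj RU hRj hRU] at hj
      have hjU : J &&& U2 = 0 := by omega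
      have hjr : Rj &&& RU = 0 := by omega
      have hj' : J &&& (U/2) = 0 := by rw [show U/2 = U2 by omega]; exact hjU
      interval_cases Rj
      · -- j even, J ≥ 1
        have ih := IH J (by omega) U B hbU hj'
        rw [show b + j = 2*(B + J) + Rb by omega, show u + j = 2*(U + J) + Ru by omega,
          land_decomp (B + J) (U + J) Rb Ru hRb hRu]
        omega
      · -- j odd, hence RU = 0
        have hRU0 : RU = 0 := by interval_cases RU <;> simp_all
        interval_cases Ru
        · -- u even, so Rb = 0
          have hRb0 : Rb = 0 := by
            have : Rb &&& 0 = 0 := Nat.and_zero Rb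
            omega
          have ih := IH J (by omega) U B hbU hj'
          rw [show b + j = 2*(B + J) + 1 by omega, show u + j = 2*(U + J) + 1 by omega,
            land_decomp (B + J) (U + J) 1 1 (by omega) (by omega)]
          have e11 : (1:ℕ) &&& 1 = 1 := rfl
          omega
        · -- u odd
          -- B is even: decompose hbU
          obtain ⟨B2, RB, hBe, hRB⟩ : ∃ C R, B = 2*C + R ∧ R ≤ 1 := ⟨B/2, B%2, by omega, by omega⟩
          rw [hBe, hUe, land_decomp B2 U2 RB RU hRB hRU] at hbU
          have hz : RB &&& RU = 0 := by rw [hRU0]; exact Nat.and_zero RB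
          have c3 : B2 &&& U2 ≤ B2 := Nat.and_le_left
          have c4 : RB &&& RU ≤ RB := Nat.and_le_left
          have hBU : B2 &&& U2 = B2 := by omega
          have hRB0 : RB = 0 := by omega
          have hj'' : J &&& ((U + 1)/2) = 0 := by
            rw [show (U + 1)/2 = U2 by omega]; exact hjU
          have hbU1 : B &&& (U + 1) = B := by
            rw [hBe, show U + 1 = 2*U2 + 1 by omega,
              land_decomp B2 U2 RB 1 hRB (by omega), hBU]
            have : RB &&& 1 = 0 := by simp [hRB0]
            omega
          interval_cases Rb
          · have ih := IH J (by omega) (U + 1) B hbU1 hj''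
            rw [show b + j = 2*(B + J) + 1 by omega, show u + j = 2*(U + 1 + J) + 0 by omega,
              land_decomp (B + J) (U + 1 + J) 1 0 (by omega) (by omega)]
            have e10 : (1:ℕ) &&& 0 = 0 := rfl
            omega
          · have hbU2 : (B + 1) &&& (U + 1) = B + 1 := by
              rw [show B + 1 = 2*B2 + 1 by omega, show U + 1 = 2*U2 + 1 by omega,
                land_decomp B2 U2 1 1 (by omega) (by omega), hBU]
              have e : (1:ℕ) &&& 1 = 1 := rfl
              omega
            have ih := IH J (by omega) (U + 1) (B + 1) hbU2 hj''
            rw [show b + j = 2*(B + 1 + J) + 0 by omega, show u + j = 2*(U + 1 + J) + 0 by omega,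
              land_decomp (B + 1 + J) (U + 1 + J) 0 0 (by omega) (by omega)]
            have e00 : (0:ℕ) &&& 0 = 0 := rfl
            omega



/-- If `l + m = t + j`, `j > 0`, `Q t l m` is odd, `s` is the position of the top
binary digit of `j`, and `2^s ∤ t`, then there are `l' ≤ l`, `m' ≤ m` with
`l' + m' = t` and `C(t, l')` odd. -/
theorem stmt_9 (t l m j s : ℕ) (hj : 0 < j) (h : l + m = t + j)
    (hQ : Odd (Q t l m)) (hs : j.testBit s) (hs' : ∀ i, s < i → ¬ j.testBit i)
    (ht : ¬ (2 ^ s ∣ t)) :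
    ∃ l' m' : ℕ, l' ≤ l ∧ m' ≤ m ∧ l' + m' = t ∧ Odd (Nat.choose t l') := by
  by_cases hg : t < m ∨ l + m < t
  · rw [Q, if_pos hg] at hQ
    exact absurd hQ (by decide)
  · rw [Q, if_neg hg] at hQ
    push_neg at hg
    rw [Nat.odd_mul] at hQ
    obtain ⟨hc1, hc2⟩ := hQ
    by_cases htj : t < j
    · have e1 : 2 * t - l - m = 0 := by omega
      rw [e1] at hc1
      have htm : t - m = 0 := by
        by_contra h0
        rw [Nat.choose_eq_zero_of_lt (by omega)] at hc1
        exact (by decide : ¬ Odd 0) hc1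
      exact ⟨0, t, Nat.zero_le l, by omega, by omega, by simpa using odd_one⟩
    · obtain ⟨u, rfl⟩ : ∃ u, t = u + j := ⟨t - j, by omega⟩
      have e1 : 2 * (u + j) - l - m = u := by omega
      have e2 : l + m - (u + j) = j := by omega
      have e3 : (l + m) / 2 = u / 2 + j := by omega
      rw [e1] at hc1
      rw [e2, e3] at hc2
      have hb : (u + j - m) &&& u = u + j - m := (odd_choose_iff_s9 _ _).1 hc1
      have hj2 : j &&& (u / 2 + j) = j := (odd_choose_iff_s9 _ _).1 hc2
      have hj0 : j &&& (u / 2) = 0 := by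
        have h' := land_sub (u / 2 + j) j hj2
        rwa [show u / 2 + j - j = u / 2 by omega] at h'
      have hlow := land_lower j u (u + j - m) hb hj0
      have hx1 : ((u + j - m) + j) &&& (u + j) ≤ (u + j - m) + j := Nat.and_le_left
      have hx2 : ((u + j - m) + j) &&& (u + j) ≤ u + j := Nat.and_le_right
      refine ⟨((u + j - m) + j) &&& (u + j), (u + j) - (((u + j - m) + j) &&& (u + j)),
        by omega, by omega, by omega, ?_⟩
      refine (odd_choose_iff_s9 _ _).2 ?_
      rw [Nat.land_assoc, Nat.and_self]
end

section
/- Let t, l, m be natural numbers with j = l + m - t > 0, suppose Q_t^{(l,m)} is odd, and let s be the largest index with [j]_s = 1. If 2^s divides t, then j = 2^{s+1} - 2^a for some a ∈ {0, …, s}; moreover, either 2^{s+1} divides t or j = 2^s. -/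
lemma odd_choose_step {n k : ℕ} (h : Odd (n.choose k)) :
    Odd ((n % 2).choose (k % 2)) ∧ Odd ((n / 2).choose (k / 2)) := by
  haveI : Fact (Nat.Prime 2) := ⟨Nat.prime_two⟩
  have hc : n.choose k % 2 = ((n % 2).choose (k % 2) * ((n / 2).choose (k / 2))) % 2 :=
    Choose.choose_modEq_choose_mod_mul_choose_div_nat
  rw [Nat.odd_iff] at h
  rw [Nat.odd_iff, Nat.odd_iff]
  rw [h, Nat.mul_mod] at hc
  rcases Nat.mod_two_eq_zero_or_one ((n % 2).choose (k % 2)) with h1 | h1 <;>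
    rcases Nat.mod_two_eq_zero_or_one ((n / 2).choose (k / 2)) with h2 | h2 <;>
      rw [h1, h2] at hc <;> omega

lemma odd_choose_testBit : ∀ (i n k : ℕ), Odd (n.choose k) → k.testBit i → n.testBit i := by
  intro i
  induction i with
  | zero =>
    intro n k h hk
    obtain ⟨h1, _⟩ := odd_choose_step h
    simp only [Nat.testBit_zero, decide_eq_true_eq] at hk ⊢
    rcases Nat.mod_two_eq_zero_or_one n with hn | hn
    · rw [hn, hk] at h1
      simp [Nat.odd_iff] at h1
    · exact hn
  | succ i ih =>
    intro n k h hk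
    rw [Nat.testBit_add_one] at hk ⊢
    exact ih _ _ (odd_choose_step h).2 hk

/-- If `l + m = t + j`, `j > 0`, `Q t l m` is odd, `s` is the position of the top
binary digit of `j`, and `2^s ∣ t`, then `j = 2^(s+1) - 2^a` for some `a ≤ s`,
and moreover `2^(s+1) ∣ t` or `j = 2^s`. -/
theorem stmt_10 (t l m j s : ℕ) (hj : 0 < j) (h : l + m = t + j)
    (hQ : Odd (Q t l m)) (hs : j.testBit s) (hs' : ∀ i, s < i → ¬ j.testBit i)
    (ht : 2 ^ s ∣ t) :
    (∃ a : ℕ, a ≤ s ∧ j = 2 ^ (s + 1) - 2 ^ a) ∧ (2 ^ (s + 1) ∣ t ∨ j = 2 ^ s) := by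
  -- Extract oddness of the second binomial factor
  have hguard : ¬(t < m ∨ l + m < t) := by
    intro hg
    rw [Q, if_pos hg] at hQ
    simp [Nat.odd_iff] at hQ
  rw [Q, if_neg hguard] at hQ
  have hodd : Odd (Nat.choose ((t + j) / 2) j) := by
    have := (Nat.Odd.of_mul_right hQ)
    rwa [h, Nat.add_sub_cancel_left] at this
  have hbit : ∀ i, j.testBit i → ((t + j) / 2).testBit i :=
    fun i hi => odd_choose_testBit i _ _ hodd hi
  have hA : ∀ i, j.testBit i → (t + j).testBit (i + 1) := by
    intro i hi
    rw [Nat.testBit_add_one]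
    exact hbit i hi
  -- j < 2^(s+1), 2^s ≤ j
  have hjlt : j < 2 ^ (s + 1) := by
    by_contra hc
    push_neg at hc
    obtain ⟨i, hi1, hi2⟩ := Nat.exists_ge_and_testBit_of_ge_two_pow hc
    exact hs' i (by omega) hi2
  have hjge : 2 ^ s ≤ j := Nat.ge_two_pow_of_testBit hs
  -- decomposition
  set r := j % 2 ^ s with hr
  set u := t / 2 ^ s with hu
  have hrlt : r < 2 ^ s := Nat.mod_lt _ (Nat.pow_pos (n := s) (by norm_num))
  have hj1 : j / 2 ^ s = 1 := by
    have h2 : j / 2 ^ s < 2 :=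
      Nat.div_lt_of_lt_mul (by rw [← pow_succ]; exact hjlt)
    have h1 : 1 ≤ j / 2 ^ s := (Nat.one_le_div_iff (Nat.pow_pos (n := s) (by norm_num))).mpr hjge
    omega
  have hjr : j = 2 ^ s + r := by
    have := Nat.div_add_mod j (2 ^ s)
    rw [hj1] at this
    omega
  have hut : t = 2 ^ s * u := (Nat.mul_div_cancel' ht).symm
  have htj : t + j = 2 ^ s * (u + 1) + r := by
    rw [hut, hjr]; ring
  -- bits of t + j
  have hbtj : ∀ i, (t + j).testBit i =
      if i < s then r.testBit i else (u + 1).testBit (i - s) := by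
    intro i
    rw [htj, Nat.testBit_two_pow_mul_add _ hrlt]
  have hjr_bit : ∀ i, i < s → j.testBit i = r.testBit i := by
    intro i hi
    rw [hr, Nat.testBit_mod_two_pow]
    simp [hi]
  -- bits propagate upward below s
  have hstep : ∀ i, i + 1 < s → j.testBit i → j.testBit (i + 1) := by
    intro i hi hib
    have := hA i hib
    rw [hbtj (i + 1), if_pos hi] at this
    rw [hjr_bit (i + 1) hi]
    exact this
  have hup : ∀ k, k ≤ s → ∀ i, i ≤ k → j.testBit i → j.testBit k := by
    intro k
    induction k with
    | zero => intro _ i hi hib; interval_cases i; exact hib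
    | succ k ihk =>
      intro hks i hi hib
      rcases Nat.lt_or_ge i (k + 1) with hik | hik
      · rcases Nat.lt_or_ge (k + 1) s with hlt | hge
        · exact hstep k hlt (ihk (by omega) i (by omega) hib)
        · have : k + 1 = s := by omega
          rw [this]; exact hs
      · have : i = k + 1 := by omega
        rwa [this] at hib
  -- least set bit
  have hex : ∃ i, j.testBit i := ⟨s, hs⟩
  set a := Nat.find hex with ha
  have haset : j.testBit a := Nat.find_spec hex
  have hamin : ∀ i, i < a → ¬j.testBit i := fun i hi => Nat.find_min hex hi
  have has : a ≤ s := Nat.find_min' hex hs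
  have hkey : j = 2 ^ (s + 1) - 2 ^ a := by
    have hfac : 2 ^ (s + 1) - 2 ^ a = 2 ^ a * (2 ^ (s + 1 - a) - 1) := by
      rw [Nat.mul_sub, mul_one, ← pow_add]
      congr 2
      omega
    rw [hfac]
    apply Nat.eq_of_testBit_eq
    intro i
    rw [Nat.testBit_two_pow_mul]
    rcases Nat.lt_or_ge i a with hia | hia
    · simp [hamin i hia, Nat.not_le_of_lt hia]
    · rcases le_or_gt i s with his | his
      · simp only [ge_iff_le, hia, decide_true, Bool.true_and,
          Nat.testBit_two_pow_sub_one]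
        have : j.testBit i := hup i his a hia haset
        simp [this]
        omega
      · simp only [ge_iff_le, hia, decide_true, Bool.true_and,
          Nat.testBit_two_pow_sub_one]
        have : ¬ j.testBit i := hs' i his
        simp [this]
        omega
  refine ⟨⟨a, has, hkey⟩, ?_⟩
  -- second part
  rcases Nat.eq_zero_or_pos r with hr0 | hr0
  · right
    rw [hjr, hr0]
    omega
  · left
    -- r ≠ 0 forces s ≥ 1 and bit (s-1) of j set
    have hs1 : 1 ≤ s := by
      by_contra hc
      push_neg at hc
      interval_cases s
      simp at hrlt
      omega
    have hane : a ≠ s := by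
      intro hae
      rw [hae] at hkey
      have : j = 2 ^ s := by
        rw [hkey]
        have : (2:ℕ) ^ (s + 1) = 2 * 2 ^ s := by ring
        omega
      omega
    have hbs1 : j.testBit (s - 1) := hup (s - 1) (by omega) a (by omega) haset
    have := hA (s - 1) hbs1
    rw [hbtj (s - 1 + 1)] at this
    have hseq : s - 1 + 1 = s := by omega
    rw [hseq, if_neg (by omega), Nat.sub_self] at this
    rw [Nat.testBit_zero, decide_eq_true_eq] at this
    have hueven : u % 2 = 0 := by omega
    obtain ⟨v, hv⟩ : ∃ v, u = 2 * v := ⟨u / 2, by omega⟩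
    refine ⟨v, ?_⟩
    rw [hut, hv]
    ring
end

section
/- Let s be a natural number. If Q_{2^s}^{(l,m)} is odd, then l = 2^s or m = 2^s, where Q_t^{(l,m)} = C(2t-l-m, t-m)·C(⌊(l+m)/2⌋, l+m-t). -/
private lemma lucas_step {n k : ℕ} (h : Odd (Nat.choose n k)) :
    Odd (Nat.choose (n % 2) (k % 2)) ∧ Odd (Nat.choose (n / 2) (k / 2)) := by
  have := Choose.choose_modEq_choose_mod_mul_choose_div_nat (p := 2) (n := n) (k := k)
  rw [Nat.ModEq] at this
  rw [Nat.odd_iff] at h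
  rw [h] at this
  rw [← Nat.odd_mul, Nat.odd_iff]
  omega

private lemma lemM : ∀ s e : ℕ, 2 * e ≤ 2 ^ s - 1 →
    Odd (Nat.choose (2 ^ s - 1 - e) (2 ^ s - 1 - 2 * e)) → e = 0 := by
  intro s
  induction s with
  | zero => intro e he _; omega
  | succ s ih =>
    intro e he h
    have hpow : 2 ^ (s + 1) = 2 * 2 ^ s := by ring
    have hpos : 0 < 2 ^ s := Nat.pow_pos (by norm_num)
    obtain ⟨h1, h2⟩ := lucas_step h
    -- k = 2^(s+1)-1-2e is odd
    have hk : (2 ^ (s + 1) - 1 - 2 * e) % 2 = 1 := by omega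
    rw [hk] at h1
    have hn : (2 ^ (s + 1) - 1 - e) % 2 = 1 := by
      by_contra hc
      have : (2 ^ (s + 1) - 1 - e) % 2 = 0 := by omega
      rw [this] at h1
      simp [Nat.choose] at h1
    have heven : e % 2 = 0 := by omega
    have hn2 : (2 ^ (s + 1) - 1 - e) / 2 = 2 ^ s - 1 - e / 2 := by omega
    have hk2 : (2 ^ (s + 1) - 1 - 2 * e) / 2 = 2 ^ s - 1 - 2 * (e / 2) := by omega
    rw [hn2, hk2] at h2
    have := ih (e / 2) (by omega) h2
    omega

private lemma lemL : ∀ s a b : ℕ, 0 < a → 0 < b → a + b ≤ 2 ^ s →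
    Odd (Nat.choose (a + b) b) →
    Odd (Nat.choose (2 ^ s - (a + b + 1) / 2) (2 ^ s - (a + b))) → False := by
  intro s
  induction s with
  | zero => intro a b ha hb hab _ _; simp at hab; omega
  | succ s ih =>
    intro a b ha hb hab h1 h2
    have hpow : 2 ^ (s + 1) = 2 * 2 ^ s := by ring
    have hpos : 0 < 2 ^ s := Nat.pow_pos (by norm_num)
    set c := a + b with hc
    rcases Nat.even_or_odd c with hce | hco
    · -- c even
      have hc2 : c % 2 = 0 := Nat.even_iff.mp hce
      rcases Nat.even_or_odd b with hbe | hbo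
      · -- b even, a even
        have hb2 : b % 2 = 0 := Nat.even_iff.mp hbe
        obtain ⟨g1a, g1⟩ := lucas_step h1
        obtain ⟨g2a, g2⟩ := lucas_step h2
        have e1 : c / 2 = a / 2 + b / 2 := by omega
        rw [e1] at g1
        have e2 : (2 ^ (s + 1) - (c + 1) / 2) / 2 = 2 ^ s - (a / 2 + b / 2 + 1) / 2 := by
          omega
        have e3 : (2 ^ (s + 1) - c) / 2 = 2 ^ s - (a / 2 + b / 2) := by omega
        rw [e2, e3] at g2
        exact ih (a / 2) (b / 2) (by omega) (by omega) (by omega) g1 g2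
      · -- b odd, a odd: first binomial gives C(0,1)
        have hb2 : b % 2 = 1 := Nat.odd_iff.mp hbo
        obtain ⟨g1a, _⟩ := lucas_step h1
        rw [hc2, hb2] at g1a
        simp [Nat.choose] at g1a
    · -- c odd
      have hc2 : c % 2 = 1 := Nat.odd_iff.mp hco
      obtain ⟨g2a, g2⟩ := lucas_step h2
      have hk : (2 ^ (s + 1) - c) % 2 = 1 := by omega
      rw [hk] at g2a
      have hn : (2 ^ (s + 1) - (c + 1) / 2) % 2 = 1 := by
        by_contra hcon
        have : (2 ^ (s + 1) - (c + 1) / 2) % 2 = 0 := by omega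
        rw [this] at g2a
        simp [Nat.choose] at g2a
      -- so (c+1)/2 is odd, i.e. c % 4 = 1; write c = 4e+1
      have hmod4 : c % 4 = 1 := by omega
      have hc1 : c = 1 := by
        by_contra hne
        -- c = 4e+1 with e ≥ 1
        have e4 : ∃ e, c = 4 * e + 1 ∧ 0 < e := by
          refine ⟨c / 4, by omega, by omega⟩
        obtain ⟨e, hce4, hepos⟩ := e4
        have en : (2 ^ (s + 1) - (c + 1) / 2) / 2 = 2 ^ s - 1 - e := by omega
        have ek : (2 ^ (s + 1) - c) / 2 = 2 ^ s - 1 - 2 * e := by omega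
        rw [en, ek] at g2
        have := lemM s e (by omega) g2
        omega
      omega

theorem stmt_12 (s l m : ℕ) (h : Odd (Q (2 ^ s) l m)) : l = 2 ^ s ∨ m = 2 ^ s := by
  unfold Q at h
  split_ifs at h with hguard
  · simp at h
  push_neg at hguard
  obtain ⟨hm, hlm⟩ := hguard
  rw [Nat.odd_mul] at h
  obtain ⟨h1, h2⟩ := h
  by_contra hcon
  push_neg at hcon
  obtain ⟨hl, hm'⟩ := hcon
  have hmlt : m < 2 ^ s := lt_of_le_of_ne hm hm'
  -- first binomial odd forces l ≤ 2^s
  have hllt : l < 2 ^ s := by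
    rcases lt_or_ge l (2 ^ s) with h' | h'
    · exact h'
    · exfalso
      have hl' : 2 ^ s < l := lt_of_le_of_ne h' (Ne.symm hl)
      have : 2 * 2 ^ s - l - m < 2 ^ s - m := by omega
      rw [Nat.choose_eq_zero_of_lt this] at h1
      simp at h1
  set a := 2 ^ s - l with ha
  set b := 2 ^ s - m with hb
  have hab1 : 2 * 2 ^ s - l - m = a + b := by omega
  have hab2 : (l + m) / 2 = 2 ^ s - (a + b + 1) / 2 := by omega
  have hab3 : l + m - 2 ^ s = 2 ^ s - (a + b) := by omega
  rw [hab1] at h1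
  rw [hab2, hab3] at h2
  exact lemL s a b (by omega) (by omega) (by omega) h1 h2
end

section
/- Define l # m as follows: let s ∈ ℕ be smallest such that [l]_r + [m]_r ≤ 1 for all r ≥ s, and let l # m = (Σ_{i≥s}[l]_i 2^i) + (Σ_{i≥s}[m]_i 2^i) + 2^s - 1. Then for all l, m ∈ ℕ: max(l,m) ≤ l # m ≤ l + m. -/
/-- `l ⊥ m`: the binary expansions of `l` and `m` are disjoint. -/
def Perp (l m : ℕ) : Prop := ∀ i : ℕ, ¬(l.testBit i ∧ m.testBit i)

/-- The smallest `s` such that the binary digits of `l` and `m` are disjoint in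
all positions `≥ s`. -/
noncomputable def hashS (l m : ℕ) : ℕ :=
  sInf {s : ℕ | ∀ r : ℕ, s ≤ r → ¬(l.testBit r ∧ m.testBit r)}

/-- `l # m = (Σ_{i≥s}[l]_i 2^i) + (Σ_{i≥s}[m]_i 2^i) + 2^s - 1`, where `s = hashS l m`;
the truncation `Σ_{i≥s}[n]_i 2^i` equals `2^s * (n / 2^s)`. -/
noncomputable def hash (l m : ℕ) : ℕ :=
  2 ^ hashS l m * (l / 2 ^ hashS l m) + 2 ^ hashS l m * (m / 2 ^ hashS l m)
    + (2 ^ hashS l m - 1)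

private lemma testBit_ge' (x i : ℕ) (h : x.testBit i = true) : 2 ^ i ≤ x := by
  by_contra hlt
  rw [Nat.testBit_lt_two_pow (Nat.lt_of_not_le hlt)] at h
  exact Bool.false_ne_true h

theorem stmt_14 (l m : ℕ) : max l m ≤ hash l m ∧ hash l m ≤ l + m := by
  show max l m ≤ 2 ^ hashS l m * (l / 2 ^ hashS l m) + 2 ^ hashS l m * (m / 2 ^ hashS l m)
      + (2 ^ hashS l m - 1) ∧
    2 ^ hashS l m * (l / 2 ^ hashS l m) + 2 ^ hashS l m * (m / 2 ^ hashS l m)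
      + (2 ^ hashS l m - 1) ≤ l + m
  generalize hsdef : hashS l m = s
  have hpos : 0 < 2 ^ s := Nat.two_pow_pos s
  have hmodl : l % 2 ^ s ≤ 2 ^ s - 1 := Nat.le_sub_one_of_lt (Nat.mod_lt _ hpos)
  have hmodm : m % 2 ^ s ≤ 2 ^ s - 1 := Nat.le_sub_one_of_lt (Nat.mod_lt _ hpos)
  have hl := Nat.div_add_mod l (2 ^ s)
  have hm := Nat.div_add_mod m (2 ^ s)
  have hmax : max l m ≤ 2 ^ s * (l / 2 ^ s) + 2 ^ s * (m / 2 ^ s) + (2 ^ s - 1) := by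
    rw [max_le_iff]; omega
  refine ⟨hmax, ?_⟩
  have hne : Set.Nonempty {t : ℕ | ∀ r : ℕ, t ≤ r → ¬(l.testBit r ∧ m.testBit r)} := by
    refine ⟨l, fun r hr ⟨hlr, _⟩ => ?_⟩
    have : l < 2 ^ r := lt_of_lt_of_le (Nat.lt_two_pow_self (n := l)) (Nat.pow_le_pow_right (by norm_num) hr)
    rw [Nat.testBit_lt_two_pow this] at hlr
    exact Bool.false_ne_true hlr
  have hmem : s ∈ {t : ℕ | ∀ r : ℕ, t ≤ r → ¬(l.testBit r ∧ m.testBit r)} := by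
    rw [← hsdef, hashS]; exact Nat.sInf_mem hne
  rcases Nat.eq_zero_or_pos s with h0 | hspos
  · subst h0; simp
  · obtain ⟨k, hk⟩ : ∃ k, s = k + 1 := ⟨s - 1, by omega⟩
    have hknot : k ∉ {t : ℕ | ∀ r : ℕ, t ≤ r → ¬(l.testBit r ∧ m.testBit r)} := by
      intro hkmem
      have hle := Nat.sInf_le hkmem
      rw [hashS] at hsdef
      omega
    simp only [Set.mem_setOf_eq, not_forall] at hknot
    obtain ⟨r, hr, hboth⟩ := hknot
    rw [not_not] at hboth
    have hrk : r = k := by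
      by_contra hne'
      exact hmem r (by omega) hboth
    subst hrk
    have hlk : 2 ^ r ≤ l % 2 ^ s := by
      rw [hk]
      apply testBit_ge'
      rw [Nat.testBit_mod_two_pow]
      simp [hboth.1]
    have hmk : 2 ^ r ≤ m % 2 ^ s := by
      rw [hk]
      apply testBit_ge'
      rw [Nat.testBit_mod_two_pow]
      simp [hboth.2]
    have hpow : 2 ^ s = 2 * 2 ^ r := by rw [hk]; ring
    omega
end

section
/- For natural numbers l and m, l # m = l + m if and only if l ⊥ m (the binary expansions of l and m are disjoint). -/
theorem stmt_15 (l m : ℕ) : hash l m = l + m ↔ Perp l m := by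
  constructor
  · intro h
    by_contra hnp
    set s := hashS l m with hs
    -- the set is nonempty
    have hne : {s : ℕ | ∀ r : ℕ, s ≤ r → ¬(l.testBit r ∧ m.testBit r)}.Nonempty := by
      refine ⟨l, fun r hr ⟨hl, _⟩ => ?_⟩
      have : l < 2 ^ r := lt_of_lt_of_le (Nat.lt_two_pow_self (n := l)) (Nat.pow_le_pow_right (by norm_num) hr)
      simp [Nat.testBit_lt_two_pow this] at hl
    have hmem : s ∈ {s : ℕ | ∀ r : ℕ, s ≤ r → ¬(l.testBit r ∧ m.testBit r)} :=
      Nat.sInf_mem hne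
    have hs0 : s ≠ 0 := by
      intro h0
      exact hnp (fun i => hmem i (h0 ▸ Nat.zero_le i))
    have hlt : s - 1 < s := Nat.sub_lt (Nat.pos_of_ne_zero hs0) one_pos
    have hnot : s - 1 ∉ {s : ℕ | ∀ r : ℕ, s ≤ r → ¬(l.testBit r ∧ m.testBit r)} :=
      Nat.notMem_of_lt_sInf hlt
    simp only [Set.mem_setOf_eq, not_forall] at hnot
    obtain ⟨r, hr⟩ := hnot
    obtain ⟨hrge, hrb⟩ := hr
    obtain ⟨hl, hm⟩ := not_not.mp hrb
    -- r = s - 1, since r ≥ s contradicts hmem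
    have hrs : r = s - 1 := by
      by_contra hne'
      have : s ≤ r := by omega
      exact hmem r this ⟨hl, hm⟩
    subst hrs
    have h1 : Nat.testBit (l % 2 ^ s) (s - 1) = true := by
      rw [Nat.testBit_mod_two_pow]; simp [hlt, hl]
    have h2 : Nat.testBit (m % 2 ^ s) (s - 1) = true := by
      rw [Nat.testBit_mod_two_pow]; simp [hlt, hm]
    have g1 : 2 ^ (s - 1) ≤ l % 2 ^ s := Nat.ge_two_pow_of_testBit h1
    have g2 : 2 ^ (s - 1) ≤ m % 2 ^ s := Nat.ge_two_pow_of_testBit h2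
    have e1 : 2 ^ s * (l / 2 ^ s) + l % 2 ^ s = l := Nat.div_add_mod l (2 ^ s)
    have e2 : 2 ^ s * (m / 2 ^ s) + m % 2 ^ s = m := Nat.div_add_mod m (2 ^ s)
    have epow : 2 ^ s = 2 * 2 ^ (s - 1) := by
      conv_lhs => rw [show s = (s - 1) + 1 by omega, pow_succ]
      ring
    unfold _root_.hash at h
    rw [← hs] at h
    omega
  · intro hp
    have h0 : hashS l m = 0 := by
      unfold hashS
      rw [Nat.sInf_eq_zero]
      left
      exact fun r _ => hp r
    simp [_root_.hash, h0]
end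

section
/- For natural numbers λ ≤ l and μ ≤ m, one has λ # μ ≤ l # m. -/
lemma hashS_mem (l m : ℕ) :
    hashS l m ∈ {s : ℕ | ∀ r : ℕ, s ≤ r → ¬(l.testBit r ∧ m.testBit r)} := by
  apply Nat.sInf_mem
  refine ⟨l, fun r hr ⟨h1, _⟩ => ?_⟩
  have := Nat.ge_two_pow_of_testBit h1
  have h2 : l < 2 ^ r := lt_of_le_of_lt hr (Nat.lt_two_pow_self (n := r))
  omega

lemma hashS_spec (l m : ℕ) : ∀ r : ℕ, hashS l m ≤ r → ¬(l.testBit r ∧ m.testBit r) :=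
  hashS_mem l m

lemma hashS_min (l m : ℕ) (h : 0 < hashS l m) :
    l.testBit (hashS l m - 1) ∧ m.testBit (hashS l m - 1) := by
  by_contra hc
  have hmem : hashS l m - 1 ∈ {s : ℕ | ∀ r : ℕ, s ≤ r → ¬(l.testBit r ∧ m.testBit r)} := by
    intro r hr
    rcases eq_or_lt_of_le hr with he | hlt
    · rw [← he]; exact hc
    · exact hashS_spec l m r (by omega)
  have := Nat.sInf_le hmem
  unfold hashS at h this
  omega

lemma perp_add_lt (s : ℕ) : ∀ x y : ℕ, Perp x y → x < 2 ^ s → y < 2 ^ s →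
    x + y < 2 ^ s := by
  induction s with
  | zero => intro x y _ hx hy; omega
  | succ s ih =>
    intro x y hp hx hy
    have h0 : ¬(x.testBit 0 ∧ y.testBit 0) := hp 0
    have hb : x % 2 + y % 2 ≤ 1 := by
      simp only [Nat.testBit_zero, decide_eq_true_eq] at h0
      omega
    have hp' : Perp (x / 2) (y / 2) := by
      intro i ⟨h1, h2⟩
      rw [Nat.testBit_div_two] at h1 h2
      exact hp (i + 1) ⟨h1, h2⟩
    have hx' : x / 2 < 2 ^ s := by rw [pow_succ] at hx; omega
    have hy' : y / 2 < 2 ^ s := by rw [pow_succ] at hy; omega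
    have := ih (x / 2) (y / 2) hp' hx' hy'
    rw [pow_succ]
    omega

lemma hash_ub (l m a b : ℕ) (ha : a ≤ l) (hb : b ≤ m) (hp : Perp a b) :
    a + b ≤ hash l m := by
  set s := hashS l m with hs
  have hp' : Perp (a % 2 ^ s) (b % 2 ^ s) := by
    intro i ⟨h1, h2⟩
    rw [Nat.testBit_mod_two_pow] at h1 h2
    simp only [Bool.and_eq_true, decide_eq_true_eq] at h1 h2
    exact hp i ⟨h1.2, h2.2⟩
  have hpos : 0 < 2 ^ s := Nat.pow_pos (by norm_num)
  have hlt : a % 2 ^ s + b % 2 ^ s < 2 ^ s :=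
    perp_add_lt s _ _ hp' (Nat.mod_lt _ hpos) (Nat.mod_lt _ hpos)
  have hda : 2 ^ s * (a / 2 ^ s) ≤ 2 ^ s * (l / 2 ^ s) :=
    Nat.mul_le_mul_left _ (Nat.div_le_div_right ha)
  have hdb : 2 ^ s * (b / 2 ^ s) ≤ 2 ^ s * (m / 2 ^ s) :=
    Nat.mul_le_mul_left _ (Nat.div_le_div_right hb)
  have hea := Nat.div_add_mod a (2 ^ s)
  have heb := Nat.div_add_mod b (2 ^ s)
  unfold _root_.hash
  rw [← hs]
  omega

lemma hash_ex (l m : ℕ) : ∃ a b : ℕ, a ≤ l ∧ b ≤ m ∧ Perp a b ∧ a + b = hash l m := by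
  set s := hashS l m with hs
  rcases Nat.eq_zero_or_pos s with h0 | hpos
  · refine ⟨l, m, le_refl l, le_refl m, fun i ⟨h1, h2⟩ => hashS_spec l m i (by omega) ⟨h1, h2⟩, ?_⟩
    unfold _root_.hash
    rw [← hs, h0]
    simp
  · obtain ⟨k, hk⟩ : ∃ k, s = k + 1 := ⟨s - 1, by omega⟩
    have hbits := hashS_min l m hpos
    rw [← hs] at hbits
    have hlk : l.testBit k := by rw [hk] at hbits; simpa using hbits.1
    have hmk : m.testBit k := by rw [hk] at hbits; simpa using hbits.2
    have hks : (2:ℕ) ^ k < 2 ^ s := by rw [hk]; exact Nat.pow_lt_pow_succ (by norm_num)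
    have hkpos : 0 < (2:ℕ) ^ k := Nat.pow_pos (by norm_num)
    have hks1 : (2:ℕ) ^ k - 1 < 2 ^ s := by omega
    refine ⟨2 ^ s * (l / 2 ^ s) + 2 ^ k, 2 ^ s * (m / 2 ^ s) + (2 ^ k - 1), ?_, ?_, ?_, ?_⟩
    · -- a ≤ l
      have h1 : (l % 2 ^ s).testBit k = true := by
        rw [Nat.testBit_mod_two_pow]
        simp [hk, hlk]
      have h2 := Nat.ge_two_pow_of_testBit h1
      have := Nat.div_add_mod l (2 ^ s)
      omega
    · -- b ≤ m
      have h1 : (m % 2 ^ s).testBit k = true := by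
        rw [Nat.testBit_mod_two_pow]
        simp [hk, hmk]
      have h2 := Nat.ge_two_pow_of_testBit h1
      have := Nat.div_add_mod m (2 ^ s)
      omega
    · -- Perp
      intro i ⟨h1, h2⟩
      rw [Nat.testBit_two_pow_mul_add _ hks] at h1
      rw [Nat.testBit_two_pow_mul_add _ hks1] at h2
      by_cases hi : i < s
      · rw [if_pos hi] at h1 h2
        rw [Nat.testBit_two_pow] at h1
        rw [Nat.testBit_two_pow_sub_one] at h2
        simp only [decide_eq_true_eq] at h1 h2
        omega
      · rw [if_neg hi] at h1 h2
        rw [← Nat.shiftRight_eq_div_pow, Nat.testBit_shiftRight] at h1 h2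
        have hi' : s + (i - s) = i := by omega
        rw [hi'] at h1 h2
        exact hashS_spec l m i (by omega) ⟨h1, h2⟩
    · -- sum
      unfold _root_.hash
      rw [← hs]
      have : (2:ℕ) ^ s = 2 ^ k + 2 ^ k := by rw [hk, pow_succ]; ring
      omega

theorem stmt_16 (l m lam mu : ℕ) (hl : lam ≤ l) (hm : mu ≤ m) :
    hash lam mu ≤ hash l m := by
  obtain ⟨a, b, ha, hb, hp, hsum⟩ := hash_ex lam mu
  rw [← hsum]
  exact hash_ub l m a b (le_trans ha hl) (le_trans hb hm) hp
end

section
/- If l ⊥ m (binary expansions disjoint), l, m ≥ 1, and ν(l) < ν(m) where ν(n) is the 2-adic valuation, then l # (m-1) < (l-1) # m = l # m − 1 = l + m − 1. -/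
/- auxiliary lemmas -/

lemma aux_pred_div (n r : ℕ) (h : n % r ≠ 0) : (n - 1) / r = n / r := by
  rcases Nat.eq_zero_or_pos r with h0 | hr
  · simp [h0]
  have hd := Nat.div_add_mod n r
  have hmod : n % r < r := Nat.mod_lt _ hr
  have h1 : n - 1 = (n % r - 1) + r * (n / r) := by omega
  rw [h1, Nat.add_mul_div_left _ _ hr, Nat.div_eq_of_lt (by omega)]
  omega

lemma aux_testBit_pred (n r : ℕ) (h : ¬ 2 ^ r ∣ n) :
    (n - 1).testBit r = n.testBit r := by
  rw [Nat.testBit_eq_decide_div_mod_eq, Nat.testBit_eq_decide_div_mod_eq,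
    aux_pred_div n (2 ^ r) (fun hc => h (Nat.dvd_of_mod_eq_zero hc))]

lemma aux_testBit_false_of_dvd (n i : ℕ) (h : 2 ^ (i + 1) ∣ n) :
    n.testBit i = false := by
  obtain ⟨k, hk⟩ := h
  subst hk
  rw [Nat.testBit_eq_decide_div_mod_eq, pow_succ]
  have : 2 ^ i * 2 * k / 2 ^ i = 2 * k := by
    rw [mul_assoc, Nat.mul_div_cancel_left _ (Nat.pow_pos (by norm_num))]
  simp [this, Nat.mul_mod_right]

lemma aux_testBit_pred_true (n i : ℕ) (hn : n ≠ 0) (h : 2 ^ (i + 1) ∣ n) :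
    (n - 1).testBit i = true := by
  obtain ⟨k, hk⟩ := h
  have hk0 : 0 < k := by
    rcases Nat.eq_zero_or_pos k with h0 | h0
    · simp [h0] at hk; omega
    · exact h0
  have hpos : 0 < 2 ^ i := Nat.pow_pos (by norm_num)
  have h2 : 2 ^ i * (2 * k - 1) + 2 ^ i = n := by
    calc 2 ^ i * (2 * k - 1) + 2 ^ i = 2 ^ i * ((2 * k - 1) + 1) := by ring
    _ = 2 ^ i * (2 * k) := by congr 1; omega
    _ = n := by rw [hk, pow_succ]; ring
  have h1 : n - 1 = (2 ^ i - 1) + 2 ^ i * (2 * k - 1) := by omega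
  rw [Nat.testBit_eq_decide_div_mod_eq, h1, Nat.add_mul_div_left _ _ hpos,
    Nat.div_eq_of_lt (by omega)]
  simp only [decide_eq_true_eq]
  omega

lemma aux_testBit_val (n : ℕ) (hn : n ≠ 0) :
    n.testBit (padicValNat 2 n) = true := by
  set a := padicValNat 2 n with ha
  obtain ⟨k, hk⟩ := pow_padicValNat_dvd (p := 2) (n := n)
  have hk1 : k % 2 = 1 := by
    rcases Nat.mod_two_eq_zero_or_one k with h0 | h1
    · exfalso
      obtain ⟨t, ht⟩ := Nat.dvd_of_mod_eq_zero h0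
      have : 2 ^ (a + 1) ∣ n := ⟨t, by rw [hk, ht]; ring⟩
      exact pow_succ_padicValNat_not_dvd (p := 2) hn this
    · exact h1
  have hpos : 0 < 2 ^ a := Nat.pow_pos (by norm_num)
  rw [Nat.testBit_eq_decide_div_mod_eq, hk, Nat.mul_div_cancel_left _ hpos]
  simp [hk1]

lemma aux_testBit_pred_val (n : ℕ) (hn : n ≠ 0) :
    (n - 1).testBit (padicValNat 2 n) = false := by
  set a := padicValNat 2 n with ha
  obtain ⟨k, hk⟩ := pow_padicValNat_dvd (p := 2) (n := n)
  have hk1 : k % 2 = 1 := by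
    rcases Nat.mod_two_eq_zero_or_one k with h0 | h1
    · exfalso
      obtain ⟨t, ht⟩ := Nat.dvd_of_mod_eq_zero h0
      have : 2 ^ (a + 1) ∣ n := ⟨t, by rw [hk, ht]; ring⟩
      exact pow_succ_padicValNat_not_dvd (p := 2) hn this
    · exact h1
  have hpos : 0 < 2 ^ a := Nat.pow_pos (by norm_num)
  have hk0 : 0 < k := by omega
  have h2 : 2 ^ a * (k - 1) + 2 ^ a = n := by
    calc 2 ^ a * (k - 1) + 2 ^ a = 2 ^ a * ((k - 1) + 1) := by ring
    _ = 2 ^ a * k := by congr 1; omega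
    _ = n := hk.symm
  have h1 : n - 1 = (2 ^ a - 1) + 2 ^ a * (k - 1) := by omega
  rw [Nat.testBit_eq_decide_div_mod_eq, h1, Nat.add_mul_div_left _ _ hpos,
    Nat.div_eq_of_lt (by omega)]
  simp only [decide_eq_false_iff_not]
  omega

lemma aux_hashS_zero (l m : ℕ) (h : Perp l m) : hashS l m = 0 := by
  rw [hashS, Nat.sInf_eq_zero]
  left
  intro r _
  exact h r

lemma aux_hash_perp (l m : ℕ) (h : Perp l m) : hash l m = l + m := by
  unfold _root_.hash
  rw [aux_hashS_zero l m h]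
  simp

/-- If `l ⊥ m`, `l, m ≥ 1` and `ν(l) < ν(m)` (2-adic valuations), then
`l # (m-1) < (l-1) # m = l # m - 1 = l + m - 1`. -/
theorem stmt_18 (l m : ℕ) (hl : 1 ≤ l) (hm : 1 ≤ m) (hperp : Perp l m)
    (hnu : padicValNat 2 l < padicValNat 2 m) :
    hash l (m - 1) < hash (l - 1) m ∧ hash (l - 1) m = hash l m - 1 ∧
      hash l m - 1 = l + m - 1 := by
  set a := padicValNat 2 l with ha
  set b := padicValNat 2 m with hb
  have hl0 : l ≠ 0 := by omega
  have hm0 : m ≠ 0 := by omega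
  have hdl : 2 ^ a ∣ l := pow_padicValNat_dvd
  have hdm : 2 ^ b ∣ m := pow_padicValNat_dvd
  have hndl : ¬ 2 ^ (a + 1) ∣ l := pow_succ_padicValNat_not_dvd (p := 2) hl0
  have hndm : ¬ 2 ^ (b + 1) ∣ m := pow_succ_padicValNat_not_dvd (p := 2) hm0
  have hmbit : ∀ i, i < b → m.testBit i = false := by
    intro i hi
    exact aux_testBit_false_of_dvd m i ((pow_dvd_pow 2 (by omega)).trans hdm)
  have hperp' : Perp (l - 1) m := by
    intro i ⟨h1, h2⟩
    by_cases hib : i < b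
    · rw [hmbit i hib] at h2; simp at h2
    · have : ¬ 2 ^ i ∣ l := fun hc =>
        hndl ((pow_dvd_pow 2 (by omega)).trans hc)
      rw [aux_testBit_pred l i this] at h1
      exact hperp i ⟨h1, h2⟩
  have hlm : hash l m = l + m := aux_hash_perp l m hperp
  have hl1m : hash (l - 1) m = (l - 1) + m := aux_hash_perp (l - 1) m hperp'
  set S := {s : ℕ | ∀ r : ℕ, s ≤ r → ¬(l.testBit r ∧ (m - 1).testBit r)} with hS
  have hbS : b ∈ S := by
    intro r hr ⟨h1, h2⟩
    rcases eq_or_lt_of_le hr with heq | hlt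
    · rw [← heq] at h2
      rw [aux_testBit_pred_val m hm0] at h2
      simp at h2
    · have : ¬ 2 ^ r ∣ m := fun hc =>
        hndm ((pow_dvd_pow 2 (by omega)).trans hc)
      rw [aux_testBit_pred m r this] at h2
      exact hperp r ⟨h1, h2⟩
  set s := hashS l (m - 1) with hs
  have hsS : s ∈ S := Nat.sInf_mem ⟨b, hbS⟩
  have hsb : s ≤ b := Nat.sInf_le hbS
  have has : a < s := by
    by_contra hc
    push_neg at hc
    refine hsS a hc ⟨aux_testBit_val l hl0, ?_⟩
    exact aux_testBit_pred_true m a hm0 ((pow_dvd_pow 2 (by omega)).trans hdm)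
  have hps : 0 < 2 ^ s := Nat.pow_pos (by norm_num)
  have hsm : 2 ^ s ∣ m := (pow_dvd_pow 2 hsb).trans hdm
  obtain ⟨q, hq⟩ := hsm
  have hq0 : 0 < q := by
    rcases Nat.eq_zero_or_pos q with h0 | h0
    · simp [h0] at hq; omega
    · exact h0
  have hEm : 2 ^ s * ((m - 1) / 2 ^ s) = m - 2 ^ s := by
    have h2 : 2 ^ s * (q - 1) + 2 ^ s = m := by
      calc 2 ^ s * (q - 1) + 2 ^ s = 2 ^ s * ((q - 1) + 1) := by ring
      _ = 2 ^ s * q := by congr 1; omega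
      _ = m := hq.symm
    have h1 : m - 1 = (2 ^ s - 1) + 2 ^ s * (q - 1) := by omega
    rw [h1, Nat.add_mul_div_left _ _ hps, Nat.div_eq_of_lt (by omega)]
    simp only [Nat.zero_add]
    omega
  have hlmod : 2 ^ a ≤ l % 2 ^ s := by
    have hdvd : 2 ^ a ∣ l % 2 ^ s :=
      (Nat.dvd_mod_iff (pow_dvd_pow 2 (by omega))).mpr hdl
    have hne : l % 2 ^ s ≠ 0 := by
      intro hc
      exact hndl ((pow_dvd_pow 2 (by omega)).trans (Nat.dvd_of_mod_eq_zero hc))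
    exact Nat.le_of_dvd (by omega) hdvd
  have hEl : 2 ^ s * (l / 2 ^ s) + l % 2 ^ s = l := Nat.div_add_mod l (2 ^ s)
  have hpa : 0 < 2 ^ a := Nat.pow_pos (by norm_num)
  have hmq : 2 ^ s ≤ m := Nat.le_of_dvd (by omega) ⟨q, hq⟩
  have hhash : hash l (m - 1) =
      2 ^ s * (l / 2 ^ s) + 2 ^ s * ((m - 1) / 2 ^ s) + (2 ^ s - 1) := rfl
  refine ⟨?_, ?_, ?_⟩
  · rw [hl1m, hhash, hEm]
    have h3 : 2 ^ s * (l / 2 ^ s) + 2 ^ a ≤ l := by omega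
    omega
  · rw [hl1m, hlm]; omega
  · rw [hlm]
end
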